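/- For each fixed c with 0 < c < 2, the function λ₅(a) = aΓ(c)[ψ(c+1-a) - ψ(a)] / (Γ(c) - Γ(a)Γ(c+1-a)) satisfies λ₅(a) ≤ 0 for all a ∈ (0, c/2], and lim_{a→0⁺} λ₅(a) = 0; hence sup_{a∈(0,c/2]} λ₅(a) = 0. -/

import Mathlib

/-- The digamma function ψ(x) = Γ'(x)/Γ(x), as the derivative of log ∘ Γ. -/
noncomputable def digamma (x : ℝ) : ℝ := deriv (fun y => Real.log (Real.Gamma y)) x

noncomputable def lam5 (c a : ℝ) : ℝ :=
  a * Real.Gamma c * (digamma (c + 1 - a) - digamma a) /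
    (Real.Gamma c - Real.Gamma a * Real.Gamma (c + 1 - a))

open Real Set Filter Topology

lemma gamma_diffAt {x : ℝ} (hx : 0 < x) : DifferentiableAt ℝ Real.Gamma x :=
  Real.differentiableAt_Gamma fun m =>
    ((neg_nonpos.mpr (Nat.cast_nonneg m)).trans_lt hx).ne'

lemma logGamma_diffAt {x : ℝ} (hx : 0 < x) :
    DifferentiableAt ℝ (fun y => Real.log (Real.Gamma y)) x :=
  (gamma_diffAt hx).log (Real.Gamma_pos_of_pos hx).ne'

lemma hasDerivAt_logGamma {x : ℝ} (hx : 0 < x) :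
    HasDerivAt (fun y => Real.log (Real.Gamma y)) (digamma x) x :=
  (logGamma_diffAt hx).hasDerivAt

lemma digamma_monotoneOn : MonotoneOn digamma (Set.Ioi 0) := by
  have h := Real.convexOn_log_Gamma.monotoneOn_deriv
      (fun x hx => by simpa [Function.comp_def] using logGamma_diffAt hx)
  exact h

lemma digamma_rec {x : ℝ} (hx : 0 < x) : digamma (x + 1) = digamma x + 1 / x := by
  unfold digamma
  rw [← deriv_comp_add_const, one_div, ← Real.deriv_log,
    ← deriv_add (logGamma_diffAt hx) (Real.differentiableAt_log hx.ne')]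
  apply Filter.EventuallyEq.deriv_eq
  filter_upwards [eventually_gt_nhds hx] with y hy
  rw [Real.Gamma_add_one hy.ne', Real.log_mul hy.ne' (Real.Gamma_pos_of_pos hy).ne',
    add_comm]
  rfl

/-- On `(0, c/2]` we have `Γ(c) ≤ Γ(a)Γ(c+1-a)`. -/
lemma gamma_key {c a : ℝ} (hc0 : 0 < c) (hc2 : c < 2) (ha0 : 0 < a) (ha : a ≤ c / 2) :
    Real.Gamma c ≤ Real.Gamma a * Real.Gamma (c + 1 - a) := by
  set m : ℝ := min 1 c with hm
  have hm0 : 0 < m := lt_min one_pos hc0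
  have ham : a < m := lt_min (by linarith) (by linarith)
  set g : ℝ → ℝ := fun x => Real.log (Real.Gamma x) + Real.log (Real.Gamma (c + 1 - x))
    with hg
  have hder : ∀ x ∈ Set.Ioo a m,
      HasDerivAt g (digamma x - digamma (c + 1 - x)) x := by
    intro x hx
    have hx0 : 0 < x := ha0.trans hx.1
    have hx2 : 0 < c + 1 - x := by
      have : x < 1 := hx.2.trans_le (min_le_left _ _)
      linarith
    have h1 : HasDerivAt (fun y : ℝ => c + 1 - y) (-1) x := by
      simpa using (hasDerivAt_id x).const_sub (c + 1)
    have h2 : HasDerivAt (fun y : ℝ => Real.log (Real.Gamma (c + 1 - y)))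
        (digamma (c + 1 - x) * (-1)) x := (hasDerivAt_logGamma hx2).comp x h1
    have := (hasDerivAt_logGamma hx0).add h2
    exact this.congr_deriv (by ring)
  have hcont : ContinuousOn g (Set.Icc a m) := by
    intro x hx
    have hx0 : 0 < x := lt_of_lt_of_le ha0 hx.1
    have hx2 : 0 < c + 1 - x := by
      have : x ≤ 1 := hx.2.trans (min_le_left _ _)
      linarith
    have h1 : HasDerivAt (fun y : ℝ => c + 1 - y) (-1) x := by
      simpa using (hasDerivAt_id x).const_sub (c + 1)
    exact ((logGamma_diffAt hx0).continuousAt.add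
      (((hasDerivAt_logGamma hx2).comp x h1).continuousAt)).continuousWithinAt
  have hanti : AntitoneOn g (Set.Icc a m) := by
    apply antitoneOn_of_deriv_nonpos (convex_Icc a m) hcont
    · intro x hx
      rw [interior_Icc] at hx
      exact (hder x hx).differentiableAt.differentiableWithinAt
    · intro x hx
      rw [interior_Icc] at hx
      rw [(hder x hx).deriv]
      have hx0 : 0 < x := ha0.trans hx.1
      have hle : x ≤ c + 1 - x := by
        have h1 : x < 1 := hx.2.trans_le (min_le_left _ _)
        have h2 : x < c := hx.2.trans_le (min_le_right _ _)
        linarith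
      have := digamma_monotoneOn (Set.mem_Ioi.mpr hx0)
        (Set.mem_Ioi.mpr (hx0.trans_le hle)) hle
      linarith
  have hgm : g m = Real.log (Real.Gamma c) := by
    rcases min_cases 1 c with ⟨h1, h2⟩ | ⟨h1, h2⟩ <;> simp only [hg, hm, h1]
    · norm_num [show c + 1 - 1 = c by ring, Real.Gamma_one]
    · norm_num [show c + 1 - c = 1 by ring, Real.Gamma_one]
  have hkey : g m ≤ g a := hanti (Set.left_mem_Icc.mpr ham.le)
    (Set.right_mem_Icc.mpr ham.le) ham.le
  rw [hgm] at hkey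
  replace hkey : Real.log (Real.Gamma c)
      ≤ Real.log (Real.Gamma a) + Real.log (Real.Gamma (c + 1 - a)) := hkey
  have hc1a : 0 < c + 1 - a := by linarith
  rw [← Real.log_mul (Real.Gamma_pos_of_pos ha0).ne'
    (Real.Gamma_pos_of_pos hc1a).ne'] at hkey
  exact (Real.log_le_log_iff (Real.Gamma_pos_of_pos hc0)
    (mul_pos (Real.Gamma_pos_of_pos ha0) (Real.Gamma_pos_of_pos hc1a))).mp hkey

lemma lam5_nonpos {c : ℝ} (hc0 : 0 < c) (hc2 : c < 2) :
    ∀ a ∈ Set.Ioc (0 : ℝ) (c / 2), lam5 c a ≤ 0 := by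
  intro a ha
  obtain ⟨ha0, ha2⟩ := ha
  have hc1a : 0 < c + 1 - a := by
    have : a ≤ c / 2 := ha2
    linarith
  have hnum : 0 ≤ a * Real.Gamma c * (digamma (c + 1 - a) - digamma a) := by
    have hle : a ≤ c + 1 - a := by linarith
    have := digamma_monotoneOn (Set.mem_Ioi.mpr ha0) (Set.mem_Ioi.mpr hc1a) hle
    have h1 : 0 < a * Real.Gamma c := mul_pos ha0 (Real.Gamma_pos_of_pos hc0)
    nlinarith
  have hden : Real.Gamma c - Real.Gamma a * Real.Gamma (c + 1 - a) ≤ 0 :=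
    sub_nonpos.mpr (gamma_key hc0 hc2 ha0 ha2)
  exact div_nonpos_of_nonneg_of_nonpos hnum hden

/-- squeeze: if g is eventually bounded on the right of 0, then a * g a → 0. -/
lemma aux_squeeze {g : ℝ → ℝ} {K : ℝ}
    (h : ∀ᶠ a in 𝓝[>] (0 : ℝ), |g a| ≤ K) :
    Filter.Tendsto (fun a => a * g a) (𝓝[>] (0 : ℝ)) (𝓝 0) := by
  apply squeeze_zero_norm' (a := fun x => x * K)
  · filter_upwards [h, self_mem_nhdsWithin] with a ha ha0
    rw [Real.norm_eq_abs, abs_mul, abs_of_pos ha0]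
    exact mul_le_mul_of_nonneg_left ha ha0.le
  · have : Filter.Tendsto (fun a : ℝ => a * K) (𝓝 (0:ℝ)) (𝓝 (0 * K)) :=
      (continuous_id.mul continuous_const).tendsto 0
    simpa using this.mono_left nhdsWithin_le_nhds

lemma tendsto_gamma_comp {c : ℝ} (hc : 0 < c) :
    Filter.Tendsto (fun a : ℝ => Real.Gamma (c - a)) (𝓝[>] (0 : ℝ)) (𝓝 (Real.Gamma c)) := by
  have h1 : Filter.Tendsto (fun a : ℝ => c - a) (𝓝[>] (0:ℝ)) (𝓝 c) := by
    have : Filter.Tendsto (fun a : ℝ => c - a) (𝓝 (0:ℝ)) (𝓝 (c - 0)) :=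
      (continuous_const.sub continuous_id).tendsto 0
    simpa using this.mono_left nhdsWithin_le_nhds
  exact ((gamma_diffAt hc).continuousAt.tendsto).comp h1

lemma lam5_tendsto {c : ℝ} (hc0 : 0 < c) (hc2 : c < 2) :
    Filter.Tendsto (fun a => lam5 c a) (nhdsWithin 0 (Set.Ioi 0)) (nhds 0) := by
  set δ : ℝ := min (1/2) (c/2) with hδ
  have hδ0 : 0 < δ := lt_min (by norm_num) (by linarith)
  have hmem : Set.Ioo (0:ℝ) δ ∈ 𝓝[>] (0:ℝ) :=
    Ioo_mem_nhdsGT_of_mem ⟨le_refl 0, hδ0⟩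
  -- numerator rewritten: N a = Γ c * (a * ψ(c+1-a) - a * ψ(a+1) + 1)
  have hNt : Filter.Tendsto
      (fun a => Real.Gamma c * (a * digamma (c + 1 - a) - a * digamma (a + 1) + 1))
      (𝓝[>] (0:ℝ)) (𝓝 (Real.Gamma c)) := by
    have h1 : Filter.Tendsto (fun a : ℝ => a * digamma (c + 1 - a)) (𝓝[>] (0:ℝ)) (𝓝 0) := by
      apply aux_squeeze (K := max |digamma (c + 1 - δ)| |digamma (c + 1)|)
      filter_upwards [hmem] with a ha
      have h0 : (0:ℝ) < c + 1 - δ := by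
        have : δ ≤ 1/2 := min_le_left _ _
        linarith
      have hlb : digamma (c + 1 - δ) ≤ digamma (c + 1 - a) :=
        digamma_monotoneOn (Set.mem_Ioi.mpr h0)
          (Set.mem_Ioi.mpr (by linarith [ha.2] : (0:ℝ) < c + 1 - a)) (by linarith [ha.2])
      have hub : digamma (c + 1 - a) ≤ digamma (c + 1) :=
        digamma_monotoneOn (Set.mem_Ioi.mpr (by linarith [ha.2] : (0:ℝ) < c + 1 - a))
          (Set.mem_Ioi.mpr (by linarith)) (by linarith [ha.1])
      rw [abs_le]
      constructor
      · exact le_trans (neg_le_neg (le_max_left _ _)) (neg_abs_le _ |>.trans hlb)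
      · exact hub.trans ((le_abs_self _).trans (le_max_right _ _))
    have h2 : Filter.Tendsto (fun a : ℝ => a * digamma (a + 1)) (𝓝[>] (0:ℝ)) (𝓝 0) := by
      apply aux_squeeze (K := max |digamma 1| |digamma (1 + δ)|)
      filter_upwards [hmem] with a ha
      have hlb : digamma 1 ≤ digamma (a + 1) :=
        digamma_monotoneOn (Set.mem_Ioi.mpr one_pos)
          (Set.mem_Ioi.mpr (by linarith [ha.1])) (by linarith [ha.1])
      have hub : digamma (a + 1) ≤ digamma (1 + δ) :=
        digamma_monotoneOn (Set.mem_Ioi.mpr (by linarith [ha.1]))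
          (Set.mem_Ioi.mpr (by linarith)) (by linarith [ha.2])
      rw [abs_le]
      constructor
      · exact le_trans (neg_le_neg (le_max_left _ _)) (neg_abs_le _ |>.trans hlb)
      · exact hub.trans ((le_abs_self _).trans (le_max_right _ _))
    have := ((h1.sub h2).add_const 1).const_mul (Real.Gamma c)
    simpa using this
  -- denominator term: Γ a * Γ(c+1-a) - Γ c → atTop
  have hDt : Filter.Tendsto
      (fun a => Real.Gamma a * Real.Gamma (c + 1 - a) - Real.Gamma c)
      (𝓝[>] (0:ℝ)) atTop := by
    have hGa : Filter.Tendsto (fun a : ℝ => Real.Gamma a) (𝓝[>] (0:ℝ)) atTop := by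
      have h1 : Filter.Tendsto (fun a : ℝ => Real.Gamma (a + 1)) (𝓝[>] (0:ℝ))
          (𝓝 (Real.Gamma 1)) := by
        have ht : Filter.Tendsto (fun a : ℝ => a + 1) (𝓝[>] (0:ℝ)) (𝓝 1) := by
          have : Filter.Tendsto (fun a : ℝ => a + 1) (𝓝 (0:ℝ)) (𝓝 (0 + 1)) :=
            (continuous_id.add continuous_const).tendsto 0
          simpa using this.mono_left nhdsWithin_le_nhds
        exact ((gamma_diffAt one_pos).continuousAt.tendsto).comp ht
      rw [Real.Gamma_one] at h1
      have h2 : Filter.Tendsto (fun a : ℝ => Real.Gamma (a + 1) * a⁻¹) (𝓝[>] (0:ℝ)) atTop :=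
        h1.pos_mul_atTop one_pos tendsto_inv_nhdsGT_zero
      apply h2.congr'
      filter_upwards [self_mem_nhdsWithin] with a (ha : 0 < a)
      rw [Real.Gamma_add_one ha.ne']
      field_simp
    have hGb : Filter.Tendsto (fun a : ℝ => Real.Gamma (c + 1 - a)) (𝓝[>] (0:ℝ))
        (𝓝 (Real.Gamma (c + 1))) := tendsto_gamma_comp (by linarith)
    have hmul : Filter.Tendsto (fun a : ℝ => Real.Gamma a * Real.Gamma (c + 1 - a))
        (𝓝[>] (0:ℝ)) atTop :=
      hGa.atTop_mul_pos (Real.Gamma_pos_of_pos (by linarith : (0:ℝ) < c + 1)) hGb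
    exact tendsto_atTop_add_const_right _ _ hmul
  have hinv : Filter.Tendsto
      (fun a => (Real.Gamma a * Real.Gamma (c + 1 - a) - Real.Gamma c)⁻¹)
      (𝓝[>] (0:ℝ)) (𝓝 0) := hDt.inv_tendsto_atTop
  have hfinal := (hNt.mul hinv).neg
  rw [mul_zero, neg_zero] at hfinal
  apply hfinal.congr'
  filter_upwards [hmem] with a ha
  have ha0 : 0 < a := ha.1
  have hrec : digamma a = digamma (a + 1) - 1 / a := by
    rw [digamma_rec ha0]; ring
  have hnum : a * Real.Gamma c * (digamma (c + 1 - a) - digamma a)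
      = Real.Gamma c * (a * digamma (c + 1 - a) - a * digamma (a + 1) + 1) := by
    rw [hrec]
    field_simp
    ring
  unfold lam5
  rw [hnum, div_eq_mul_inv, show Real.Gamma c - Real.Gamma a * Real.Gamma (c + 1 - a)
    = -(Real.Gamma a * Real.Gamma (c + 1 - a) - Real.Gamma c) by ring, inv_neg,
    mul_neg]

theorem stmt_8 (c : ℝ) (hc0 : 0 < c) (hc2 : c < 2) :
    (∀ a ∈ Set.Ioc (0 : ℝ) (c / 2), lam5 c a ≤ 0) ∧
    Filter.Tendsto (fun a => lam5 c a) (nhdsWithin 0 (Set.Ioi 0)) (nhds 0) ∧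
    IsLUB ((fun a => lam5 c a) '' Set.Ioc 0 (c / 2)) 0 := by
  refine ⟨lam5_nonpos hc0 hc2, lam5_tendsto hc0 hc2, ?_, ?_⟩
  · rintro y ⟨a, ha, rfl⟩
    exact lam5_nonpos hc0 hc2 a ha
  · intro b hb
    refine le_of_tendsto (lam5_tendsto hc0 hc2) ?_
    have hmem : Set.Ioo (0:ℝ) (c/2) ∈ 𝓝[>] (0:ℝ) :=
      Ioo_mem_nhdsGT_of_mem ⟨le_refl 0, by linarith⟩
    filter_upwards [hmem] with a ha
    exact hb ⟨a, ⟨ha.1, ha.2.le⟩, rfl⟩
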